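/- arXiv:1511.01960 — 5 statements merged into one kernel-verified Lean document; each statement's English description precedes it below -/
import Mathlib

section
/- Let (M,s) be an S5 pointed Kripke structure in which every world is reachable from s, and let ψ be a fluent (propositional) formula. Then (M,s) ⊨ C(B_i ψ ∨ B_i ¬ψ) if and only if for all worlds u, v of M with (u,v) ∈ B_i, the interpretation of u satisfies ψ exactly when the interpretation of v satisfies ψ. -/
/-- Belief formulae over a set of agents `A` and a set of fluents `F`:
propositional formulae extended with belief operators `B_i` (`bel`),
group knowledge `E_α` (`ebel`) and common knowledge `C_α` (`cbel`). -/
inductive BForm (A F : Type) : Type where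
  | top  : BForm A F
  | atom : F → BForm A F
  | neg  : BForm A F → BForm A F
  | conj : BForm A F → BForm A F → BForm A F
  | disj : BForm A F → BForm A F → BForm A F
  | bel  : A → BForm A F → BForm A F
  | ebel : Set A → BForm A F → BForm A F
  | cbel : Set A → BForm A F → BForm A F

/-- A Kripke structure: a valuation of fluents at each world and an
accessibility relation for each agent. -/
structure Kripke (A W F : Type) where
  val : W → F → Prop
  rel : A → W → W → Prop

/-- Iterated group operator: `Esat M α P k w` says `E_α^k P` holds at `w`. -/
def Esat {A W F : Type} (M : Kripke A W F) (α : Set A) (P : W → Prop) : ℕ → W → Prop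
  | 0, w => P w
  | k + 1, w => ∀ i ∈ α, ∀ v, M.rel i w v → Esat M α P k v

/-- Kripke satisfaction of belief formulae.  Common knowledge `C_α φ` holds at
`w` iff `E_α^k φ` holds at `w` for every `k ≥ 0`. -/
def sat {A W F : Type} (M : Kripke A W F) : W → BForm A F → Prop
  | _, .top => True
  | w, .atom f => M.val w f
  | w, .neg φ => ¬ sat M w φ
  | w, .conj φ ψ => sat M w φ ∧ sat M w ψ
  | w, .disj φ ψ => sat M w φ ∨ sat M w ψ
  | w, .bel i φ => ∀ v, M.rel i w v → sat M v φ
  | w, .ebel α φ => ∀ i ∈ α, ∀ v, M.rel i w v → sat M v φ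
  | w, .cbel α φ => ∀ k : ℕ, Esat M α (fun v => sat M v φ) k w

/-- `M` is an S5 structure: each accessibility relation is an equivalence
relation (reflexive, symmetric, transitive). -/
def S5 {A W F : Type} (M : Kripke A W F) : Prop := ∀ i, Equivalence (M.rel i)

/-- Reachability via finite paths over the union of all accessibility relations. -/
def reach {A W F : Type} (M : Kripke A W F) : W → W → Prop :=
  Relation.ReflTransGen (fun u v => ∃ i, M.rel i u v)

/-- Reachability via finite paths labeled by agents in `α` only. -/
def reachIn {A W F : Type} (M : Kripke A W F) (α : Set A) : W → W → Prop :=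
  Relation.ReflTransGen (fun u v => ∃ i ∈ α, M.rel i u v)

/-- Two pointed Kripke structures are equivalent if they satisfy the same
belief formulae. -/
def equivState {A W W' F : Type} (M : Kripke A W F) (s : W) (M' : Kripke A W' F) (s' : W') : Prop :=
  ∀ φ : BForm A F, sat M s φ ↔ sat M' s' φ

/-- Fluent (purely propositional) formulae: no modal operators. -/
def IsProp {A F : Type} : BForm A F → Prop
  | .top => True
  | .atom _ => True
  | .neg φ => IsProp φ
  | .conj φ ψ => IsProp φ ∧ IsProp ψ
  | .disj φ ψ => IsProp φ ∧ IsProp ψ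
  | .bel _ _ => False
  | .ebel _ _ => False
  | .cbel _ _ => False

/-! Since every world is reachable from `s`, common knowledge among all agents at `s` is the same
as truth at every world. At a world `w` that `B_i`-sees itself, `B_i ψ ∨ B_i ¬ψ` says exactly that
`ψ` is constant on the `B_i`-successors of `w`. -/

section

variable {A W F : Type} (M : Kripke A W F)

theorem reachIn_univ : reachIn M Set.univ = reach M := by
  simp only [reachIn, reach, Set.mem_univ, true_and]

theorem Esat_of_forall {α : Set A} {P : W → Prop} (hP : ∀ w, P w) : ∀ k w, Esat M α P k w
  | 0, w => hP w
  | k + 1, _ => fun _ _ v _ => Esat_of_forall hP k v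

theorem Esat_of_reachIn {α : Set A} {P : W → Prop} {s w : W} (hs : ∀ k, Esat M α P k s)
    (hw : reachIn M α s w) : ∀ k, Esat M α P k w := by
  induction hw with
  | refl => exact hs
  | tail _ hstep ih =>
    obtain ⟨j, hj, hrel⟩ := hstep
    exact fun k => ih (k + 1) j hj _ hrel

theorem sat_cbel_of_forall_sat {α : Set A} {φ : BForm A F} (hφ : ∀ w, sat M w φ) (s : W) :
    sat M s (.cbel α φ) :=
  fun k => Esat_of_forall M hφ k s

theorem sat_of_sat_cbel_of_reachIn {α : Set A} {φ : BForm A F} {s w : W}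
    (hs : sat M s (.cbel α φ)) (hw : reachIn M α s w) : sat M w φ :=
  Esat_of_reachIn M hs hw 0

theorem sat_bel_or_bel_neg_iff {i : A} {ψ : BForm A F} {w : W} (hw : M.rel i w w) :
    sat M w (.disj (.bel i ψ) (.bel i (.neg ψ))) ↔
      ∀ v, M.rel i w v → (sat M w ψ ↔ sat M v ψ) := by
  constructor
  · rintro (hpos | hneg) v hv
    · exact iff_of_true (hpos w hw) (hpos v hv)
    · exact iff_of_false (hneg w hw) (hneg v hv)
  · intro h
    by_cases hψ : sat M w ψ
    · exact Or.inl fun v hv => (h v hv).mp hψ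
    · exact Or.inr fun v hv => mt (h v hv).mpr hψ

end

theorem stmt2_general {A W F : Type} (M : Kripke A W F) (s : W) (i : A)
    (h5 : S5 M) (hr : ∀ u : W, reach M s u)
    (ψ : BForm A F) :
    sat M s (.cbel Set.univ (.disj (.bel i ψ) (.bel i (.neg ψ)))) ↔
      ∀ u v : W, M.rel i u v → (sat M u ψ ↔ sat M v ψ) := by
  constructor
  · intro hC u
    have hu := sat_of_sat_cbel_of_reachIn M hC (reachIn_univ M ▸ hr u)
    exact (sat_bel_or_bel_neg_iff M ((h5 i).refl u)).mp hu
  · intro h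
    exact sat_cbel_of_forall_sat M
      (fun w => (sat_bel_or_bel_neg_iff M ((h5 i).refl w)).mpr (h w)) s

/-- In an S5 state with all worlds reachable from `s`, for a
fluent formula `ψ`: `(M,s) ⊨ C(B_i ψ ∨ B_i ¬ψ)` iff any two `B_i`-related
worlds give `ψ` the same truth value. -/
theorem stmt2 {A W F : Type} (M : Kripke A W F) (s : W) (i : A)
    (h5 : S5 M) (hr : ∀ u : W, reach M s u)
    (ψ : BForm A F) (hψ : IsProp ψ) :
    sat M s (.cbel Set.univ (.disj (.bel i ψ) (.bel i (.neg ψ)))) ↔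
      ∀ u v : W, M.rel i u v → (sat M u ψ ↔ sat M v ψ) :=
  stmt2_general M s i h5 hr ψ
end

section
/- Let (M,s) be an S5 pointed Kripke structure with every world reachable from s, and suppose the valuation-equality relation ∼ (u ∼ v iff π(u)=π(v)) is a bisimulation for each B_i (i.e., if u ∼ v and (u,x) ∈ B_i then there is y with (v,y) ∈ B_i and x ∼ y). Define the quotient structure M̃ with worlds the ∼-equivalence classes, valuation inherited from representatives, and (ũ,ṽ) ∈ M̃[i] iff some u'∈ũ, v'∈ṽ have (u',v') ∈ B_i. Then M̃ is again an S5 structure (each quotient relation is reflexive, symmetric and transitive) with at most 2^{|F|} worlds. -/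
/-- The relation `∼`: two worlds are related iff they carry identical
valuations. -/
def valSetoid {A W F : Type} (M : Kripke A W F) : Setoid W := Setoid.ker M.val

/-- The quotient (reduced) Kripke structure `M̃`: worlds are `∼`-equivalence
classes, valuations are inherited, and classes are `i`-related iff some
representatives are. -/
def quotKripke {A W F : Type} (M : Kripke A W F) : Kripke A (Quotient (valSetoid M)) F where
  val := Quotient.lift M.val (fun _ _ h => h)
  rel i x y := ∃ u v : W, Quotient.mk (valSetoid M) u = x ∧ Quotient.mk (valSetoid M) v = y ∧ M.rel i u v

section Quotient

variable {A W F : Type} {M : Kripke A W F} {i : A}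

theorem quotKripke_rel_mk {u v : W} (h : M.rel i u v) :
    (quotKripke M).rel i (Quotient.mk _ u) (Quotient.mk _ v) :=
  ⟨u, v, rfl, rfl, h⟩

theorem quotKripke_rel_refl (h : ∀ u, M.rel i u u) (x : Quotient (valSetoid M)) :
    (quotKripke M).rel i x x :=
  Quotient.inductionOn x fun u => quotKripke_rel_mk (h u)

theorem quotKripke_rel_symm (h : ∀ {u v}, M.rel i u v → M.rel i v u)
    {x y : Quotient (valSetoid M)} : (quotKripke M).rel i x y → (quotKripke M).rel i y x := by
  rintro ⟨u, v, rfl, rfl, huv⟩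
  exact quotKripke_rel_mk (h huv)

/-- The steps `[u] → [v]` and `[v'] → [w]` meet only up to `v ∼ v'`; the bisimulation moves
the second step to start at `v` itself, after which transitivity in `M` applies. -/
theorem quotKripke_rel_trans (h : ∀ {u v w}, M.rel i u v → M.rel i v w → M.rel i u w)
    (hbis : ∀ u v : W, M.val u = M.val v → ∀ x : W, M.rel i u x →
      ∃ y : W, M.rel i v y ∧ M.val x = M.val y)
    {x y z : Quotient (valSetoid M)} :
    (quotKripke M).rel i x y → (quotKripke M).rel i y z → (quotKripke M).rel i x z := by
  rintro ⟨u, v, rfl, rfl, huv⟩ ⟨v', w, hv'v, rfl, hv'w⟩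
  obtain ⟨y, hvy, hwy⟩ := hbis v' v (Quotient.exact hv'v) w hv'w
  rw [Quotient.sound (s := valSetoid M) hwy]
  exact quotKripke_rel_mk (h huv hvy)

theorem S5.quotKripke (h5 : S5 M)
    (hbis : ∀ u v : W, M.val u = M.val v → ∀ (i : A) (x : W), M.rel i u x →
      ∃ y : W, M.rel i v y ∧ M.val x = M.val y) :
    S5 (quotKripke M) := fun i =>
  ⟨quotKripke_rel_refl (h5 i).refl, quotKripke_rel_symm (h5 i).symm,
    quotKripke_rel_trans (h5 i).trans fun u v huv => hbis u v huv i⟩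

theorem card_quotient_valSetoid_le [Fintype F] (M : Kripke A W F) :
    Nat.card (Quotient (valSetoid M)) ≤ 2 ^ Fintype.card F :=
  calc Nat.card (Quotient (valSetoid M)) ≤ Nat.card (F → Prop) :=
        Nat.card_le_card_of_injective _ (Setoid.kerLift_injective M.val)
    _ = 2 ^ Fintype.card F := by
        rw [Nat.card_fun, Nat.card_eq_fintype_card, Fintype.card_prop, Nat.card_eq_fintype_card]

end Quotient

theorem stmt7_general {A W F : Type} [Fintype F] (M : Kripke A W F)
    (h5 : S5 M)
    (hbis : ∀ u v : W, M.val u = M.val v → ∀ (i : A) (x : W), M.rel i u x →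
      ∃ y : W, M.rel i v y ∧ M.val x = M.val y) :
    S5 (quotKripke M) ∧ Nat.card (Quotient (valSetoid M)) ≤ 2 ^ Fintype.card F :=
  ⟨h5.quotKripke hbis, card_quotient_valSetoid_le M⟩

/-- Under S5, reachability from `s`, and the bisimulation
property of the valuation-equality relation `∼`, the quotient structure `M̃`
is again S5 and has at most `2^{|F|}` worlds. -/
theorem stmt7 {A W F : Type} [Fintype F] (M : Kripke A W F) (s : W)
    (h5 : S5 M) (hr : ∀ u : W, reach M s u)
    (hbis : ∀ u v : W, M.val u = M.val v → ∀ (i : A) (x : W), M.rel i u x →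
      ∃ y : W, M.rel i v y ∧ M.val x = M.val y) :
    S5 (quotKripke M) ∧ Nat.card (Quotient (valSetoid M)) ≤ 2 ^ Fintype.card F :=
  stmt7_general M h5 hbis
end

section
/- Let a be a world-altering (ontic) action executable in state (M,s), with frame of reference partitioning the agents into fully observant agents F and oblivious agents O. Let (M',s') be the successor state given by the step transition for world-altering actions. Then for every oblivious agent i ∈ O and every belief formula φ: (M',s') ⊨ B_i φ if and only if (M,s) ⊨ B_i φ. -/
/-- The successor Kripke structure after a world-altering action.
`exec u` says the action is executable at world `u`; `newval u` is the updated
valuation of the fresh world `r(a,u)` (represented as `Sum.inr ⟨u,_⟩`);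
`Fo` is the set of fully observant agents, all others being oblivious.
Old worlds (`Sum.inl`) keep all old edges; fully observant agents relate new
worlds mirroring `M`; oblivious agents point from new worlds back into the old
copy of `M`. -/
def onticSucc {A W F : Type} (M : Kripke A W F) (exec : W → Prop) (newval : W → F → Prop)
    (Fo : Set A) : Kripke A (W ⊕ {u : W // exec u}) F where
  val x := match x with
    | Sum.inl u => M.val u
    | Sum.inr u => newval u.1
  rel i x y := match x, y with
    | Sum.inl u, Sum.inl v => M.rel i u v
    | Sum.inr u, Sum.inr v => i ∈ Fo ∧ M.rel i u.1 v.1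
    | Sum.inr u, Sum.inl v => i ∉ Fo ∧ M.rel i u.1 v
    | Sum.inl _, Sum.inr _ => False

/-!
The old copy of `M` sits inside the successor structure as a generated submodel: `Sum.inl` is a
bounded morphism, so an old world satisfies the same formulae in both structures. For an oblivious
agent, the worlds accessible from `r(a,s)` are exactly the old copies of those accessible from `s`.
-/

namespace Kripke

variable {A W W' F : Type}

structure IsBoundedMorphism (M : Kripke A W F) (M' : Kripke A W' F) (f : W → W') : Prop where
  val_apply : ∀ w, M'.val (f w) = M.val w
  rel_map : ∀ i w v, M.rel i w v → M'.rel i (f w) (f v)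
  exists_rel_of_rel : ∀ i w y, M'.rel i (f w) y → ∃ v, M.rel i w v ∧ f v = y

namespace IsBoundedMorphism

variable {M : Kripke A W F} {M' : Kripke A W' F} {f : W → W'}

theorem forall_rel_iff (hf : M.IsBoundedMorphism M' f) (i : A) (w : W) (P : W' → Prop) :
    (∀ y, M'.rel i (f w) y → P y) ↔ ∀ v, M.rel i w v → P (f v) := by
  refine ⟨fun h v hv => h _ (hf.rel_map i w v hv), fun h y hy => ?_⟩
  obtain ⟨v, hv, rfl⟩ := hf.exists_rel_of_rel i w y hy
  exact h v hv

theorem esat_iff (hf : M.IsBoundedMorphism M' f) (α : Set A) (P : W' → Prop) (k : ℕ) (w : W) :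
    Esat M' α P k (f w) ↔ Esat M α (P ∘ f) k w := by
  induction k generalizing w with
  | zero => rfl
  | succ k ih =>
    simp only [Esat]
    exact forall₂_congr fun i _ => (hf.forall_rel_iff i w _).trans (forall₂_congr fun v _ => ih v)

theorem sat_iff (hf : M.IsBoundedMorphism M' f) (φ : BForm A F) (w : W) :
    sat M' (f w) φ ↔ sat M w φ := by
  induction φ generalizing w with
  | top => rfl
  | atom p => simp only [sat]; rw [hf.val_apply]
  | neg φ ih => exact not_congr (ih w)
  | conj φ ψ ihφ ihψ => exact and_congr (ihφ w) (ihψ w)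
  | disj φ ψ ihφ ihψ => exact or_congr (ihφ w) (ihψ w)
  | bel i φ ih => exact (hf.forall_rel_iff i w _).trans (forall₂_congr fun v _ => ih v)
  | ebel α φ ih =>
    exact forall₂_congr fun i _ => (hf.forall_rel_iff i w _).trans (forall₂_congr fun v _ => ih v)
  | cbel α φ ih =>
    refine forall_congr' fun k => (hf.esat_iff α _ k w).trans ?_
    exact iff_of_eq (congrArg (Esat M α · k w) (funext fun v => propext (ih v)))

end IsBoundedMorphism

end Kripke

section Ontic

variable {A W F : Type}

theorem onticSucc_isBoundedMorphism_inl (M : Kripke A W F) (exec : W → Prop)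
    (newval : W → F → Prop) (Fo : Set A) :
    M.IsBoundedMorphism (onticSucc M exec newval Fo) Sum.inl where
  val_apply _ := rfl
  rel_map _ _ _ h := h
  exists_rel_of_rel _ _ y h := by
    cases y with
    | inl v => exact ⟨v, h, rfl⟩
    | inr v => exact h.elim

theorem onticSucc_rel_inr_iff_of_notMem (M : Kripke A W F) {exec : W → Prop}
    (newval : W → F → Prop) {Fo : Set A} {i : A} (hi : i ∉ Fo) (u : {u : W // exec u})
    (y : W ⊕ {u : W // exec u}) :
    (onticSucc M exec newval Fo).rel i (Sum.inr u) y ↔ ∃ v, M.rel i u.1 v ∧ Sum.inl v = y := by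
  cases y with
  | inl v => simp [onticSucc, hi]
  | inr v => simp [onticSucc, hi]

end Ontic

/-- After a world-altering action executable in `(M,s)`, with
fully observant agents `Fo` and all other agents oblivious, every oblivious
agent has exactly the same beliefs in the successor state as in `(M,s)`. -/
theorem stmt9 {A W F : Type} (M : Kripke A W F) (s : W)
    (exec : W → Prop) (newval : W → F → Prop) (Fo : Set A)
    (hs : exec s) (i : A) (hi : i ∉ Fo) (φ : BForm A F) :
    sat (onticSucc M exec newval Fo) (Sum.inr ⟨s, hs⟩) (.bel i φ) ↔
      sat M s (.bel i φ) := by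
  have hinl := onticSucc_isBoundedMorphism_inl M exec newval Fo
  simp only [sat, onticSucc_rel_inr_iff_of_notMem M newval hi]
  constructor
  · exact fun h v hv => (hinl.sat_iff φ v).mp (h _ ⟨v, hv, rfl⟩)
  · rintro h _ ⟨v, hv, rfl⟩
    exact (hinl.sat_iff φ v).mpr (h v hv)
end

section
/- Given a world-altering action a with precondition ψ, and the two-event update model Σ = ({σ, ε}, R, pre, sub) where R_i = {(σ,σ),(ε,ε)} for fully observant agents i and R_i = {(σ,ε),(ε,ε)} for oblivious agents i, pre(σ)=ψ, pre(ε)=⊤, sub(ε)=identity, and sub(σ) substitutes each fluent p by Ψ⁺(p,a) ∨ (p ∧ ¬Ψ⁻(p,a)): the update product state ((M ⊗ Σ), (s,σ)) is equivalent (satisfies the same belief formulae) to the state (M',s') produced by the direct step-transition semantics for world-altering actions. -/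
/-- An update model over agents `A`, events `E` and fluents `F`:
accessibility relations on events, a precondition formula for each event, and a
substitution assigning a belief formula to each fluent at each event. -/
structure UpdModel (A E F : Type) where
  rel : A → E → E → Prop
  pre : E → BForm A F
  sub : E → F → BForm A F

/-- The update product `M ⊗ Σ`: worlds are pairs `(u,τ)` with `(M,u) ⊨ pre τ`;
`(u,τ)` and `(u',τ')` are `i`-related iff both components are; the valuation of
`(u,τ)` makes `p` true iff `(M,u) ⊨ sub τ p`. -/
def updProd {A W E F : Type} (M : Kripke A W F) (U : UpdModel A E F) :
    Kripke A {p : W × E // sat M p.1 (U.pre p.2)} F where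
  val p f := sat M p.1.1 (U.sub p.1.2 f)
  rel i p q := M.rel i p.1.1 q.1.1 ∧ U.rel i p.1.2 q.1.2

/-- The two-event update model for a world-altering action with precondition
`ψ`, positive effect conditions `Ψp` and negative effect conditions `Ψm`:
event `true` is `σ` (the action happens), event `false` is `ε` (nothing
happens); fully observant agents (`Fo`) have `R_i = {(σ,σ),(ε,ε)}`, oblivious
agents have `R_i = {(σ,ε),(ε,ε)}`; `pre σ = ψ`, `pre ε = ⊤`; `sub ε` is the
identity and `sub σ` maps `p` to `Ψ⁺(p) ∨ (p ∧ ¬Ψ⁻(p))`. -/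
def onticUpd {A F : Type} (ψ : BForm A F) (Ψp Ψm : F → BForm A F) (Fo : Set A) :
    UpdModel A Bool F where
  rel i e e' := (i ∈ Fo ∧ e = e') ∨ (i ∉ Fo ∧ e' = false)
  pre e := match e with
    | true => ψ
    | false => .top
  sub e f := match e with
    | true => .disj (Ψp f) (.conj (.atom f) (.neg (Ψm f)))
    | false => .atom f

/-! The map sending `(u,σ)` to the fresh world `r(a,u)` and `(u,ε)` to the old world `u` is
an isomorphism from `M ⊗ Σ` onto the successor structure: `sub(σ)` evaluated at `u` is by
construction the updated valuation of `r(a,u)`, and the event relations `R_i` reproduce exactly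
the `F`-edges among new worlds and the `O`-edges into the old copy. Truth of belief formulae,
common knowledge included, is invariant under such maps; for this, injectivity is not needed. -/

namespace Kripke

variable {A W W' F : Type} {M : Kripke A W F} {M' : Kripke A W' F} {h : W → W'}

theorem forall_rel_iff_of_surjective (hsurj : Function.Surjective h)
    (hrel : ∀ i w v, M.rel i w v ↔ M'.rel i (h w) (h v))
    {P : W → Prop} {P' : W' → Prop} (hP : ∀ w, P w ↔ P' (h w)) (i : A) (w : W) :
    (∀ v, M.rel i w v → P v) ↔ ∀ v', M'.rel i (h w) v' → P' v' :=
  ⟨fun H v' hv' => by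
    obtain ⟨v, rfl⟩ := hsurj v'
    exact (hP v).mp (H v ((hrel i w v).mpr hv')),
   fun H v hv => (hP v).mpr (H (h v) ((hrel i w v).mp hv))⟩

theorem esat_iff_of_surjective (hsurj : Function.Surjective h)
    (hrel : ∀ i w v, M.rel i w v ↔ M'.rel i (h w) (h v))
    {P : W → Prop} {P' : W' → Prop} (hP : ∀ w, P w ↔ P' (h w)) (α : Set A) (k : ℕ) (w : W) :
    Esat M α P k w ↔ Esat M' α P' k (h w) := by
  induction k generalizing w with
  | zero => exact hP w
  | succ k ih =>
    exact forall₂_congr fun i _ => forall_rel_iff_of_surjective hsurj hrel ih i w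

theorem sat_iff_of_surjective (hsurj : Function.Surjective h)
    (hval : ∀ w f, M.val w f ↔ M'.val (h w) f)
    (hrel : ∀ i w v, M.rel i w v ↔ M'.rel i (h w) (h v)) (φ : BForm A F) (w : W) :
    sat M w φ ↔ sat M' (h w) φ := by
  induction φ generalizing w with
  | top => exact Iff.rfl
  | atom f => exact hval w f
  | neg φ ih => exact not_congr (ih w)
  | conj φ χ ihφ ihχ => exact and_congr (ihφ w) (ihχ w)
  | disj φ χ ihφ ihχ => exact or_congr (ihφ w) (ihχ w)
  | bel i φ ih => exact forall_rel_iff_of_surjective hsurj hrel ih i w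
  | ebel α φ ih =>
    exact forall₂_congr fun i _ => forall_rel_iff_of_surjective hsurj hrel ih i w
  | cbel α φ ih => exact forall_congr' fun k => esat_iff_of_surjective hsurj hrel ih α k w

theorem equivState_of_surjective (hsurj : Function.Surjective h)
    (hval : ∀ w f, M.val w f ↔ M'.val (h w) f)
    (hrel : ∀ i w v, M.rel i w v ↔ M'.rel i (h w) (h v)) (s : W) :
    equivState M s M' (h s) :=
  fun φ => sat_iff_of_surjective hsurj hval hrel φ s

end Kripke

section OnticAction

variable {A W F : Type} (M : Kripke A W F) (ψ : BForm A F) (Ψp Ψm : F → BForm A F) (Fo : Set A)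

def onticProdToSucc :
    {p : W × Bool // sat M p.1 ((onticUpd ψ Ψp Ψm Fo).pre p.2)} → W ⊕ {u : W // sat M u ψ}
  | ⟨(u, true), hu⟩ => Sum.inr ⟨u, hu⟩
  | ⟨(u, false), _⟩ => Sum.inl u

theorem onticProdToSucc_surjective : Function.Surjective (onticProdToSucc M ψ Ψp Ψm Fo) := by
  rintro (u | ⟨u, hu⟩)
  · exact ⟨⟨(u, false), trivial⟩, rfl⟩
  · exact ⟨⟨(u, true), hu⟩, rfl⟩

theorem onticProdToSucc_val (p) (f : F) :
    (updProd M (onticUpd ψ Ψp Ψm Fo)).val p f ↔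
      (onticSucc M (fun u => sat M u ψ)
        (fun u f => sat M u (Ψp f) ∨ (M.val u f ∧ ¬ sat M u (Ψm f))) Fo).val
        (onticProdToSucc M ψ Ψp Ψm Fo p) f := by
  rcases p with ⟨⟨u, _ | _⟩, hu⟩ <;> exact Iff.rfl

theorem onticProdToSucc_rel (i : A) (p q) :
    (updProd M (onticUpd ψ Ψp Ψm Fo)).rel i p q ↔
      (onticSucc M (fun u => sat M u ψ)
        (fun u f => sat M u (Ψp f) ∨ (M.val u f ∧ ¬ sat M u (Ψm f))) Fo).rel i
        (onticProdToSucc M ψ Ψp Ψm Fo p) (onticProdToSucc M ψ Ψp Ψm Fo q) := by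
  rcases p with ⟨⟨u, _ | _⟩, hu⟩ <;> rcases q with ⟨⟨v, _ | _⟩, hv⟩ <;>
    simp only [updProd, onticUpd, onticSucc, onticProdToSucc] <;> tauto

end OnticAction

theorem stmt12_general {A W F : Type} (M : Kripke A W F) (s : W)
    (ψ : BForm A F) (Ψp Ψm : F → BForm A F) (Fo : Set A)
    (hs : sat M s ψ) :
    equivState (updProd M (onticUpd ψ Ψp Ψm Fo)) ⟨(s, true), hs⟩
      (onticSucc M (fun u => sat M u ψ)
        (fun u f => sat M u (Ψp f) ∨ (M.val u f ∧ ¬ sat M u (Ψm f))) Fo)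
      (Sum.inr ⟨s, hs⟩) :=
  Kripke.equivState_of_surjective (onticProdToSucc_surjective M ψ Ψp Ψm Fo)
    (onticProdToSucc_val M ψ Ψp Ψm Fo) (onticProdToSucc_rel M ψ Ψp Ψm Fo) _

/-- The update product of `(M,s)` with the two-event update
model of a world-altering action, pointed at `(s,σ)`, is equivalent to the
state produced by the direct step-transition semantics for world-altering
actions. -/
theorem stmt12 {A W F : Type} (M : Kripke A W F) (s : W)
    (ψ : BForm A F) (Ψp Ψm : F → BForm A F) (Fo : Set A)
    (hcons : ∀ (u : W) (f : F), ¬ (sat M u (Ψp f) ∧ sat M u (Ψm f)))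
    (hs : sat M s ψ) :
    equivState (updProd M (onticUpd ψ Ψp Ψm Fo)) ⟨(s, true), hs⟩
      (onticSucc M (fun u => sat M u ψ)
        (fun u f => sat M u (Ψp f) ∨ (M.val u f ∧ ¬ sat M u (Ψm f))) Fo)
      (Sum.inr ⟨s, hs⟩) :=
  stmt12_general M s ψ Ψp Ψm Fo hs
end

section
/- Let (M₁,s₁) and (M₂,s₂) be initial S5-states of a consistent and complete definite action theory, both in reduced form (distinct worlds have distinct valuations) with all worlds reachable from the designated world and with the same set of worlds M₁[S] = M₂[S] and identical valuations. Then M₁[i] = M₂[i] for every agent i; hence the initial S5-state of a consistent and complete definite action theory is unique up to equivalence, and it has at most 2^{|F|} worlds. -/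
/-- The forms of initial statements of a definite action theory:
`initially φ`, `initially C φ`, `initially C(B_i φ)`,
`initially C(B_i φ ∨ B_i ¬φ)`, `initially C(¬B_i φ ∧ ¬B_i ¬φ)`. -/
inductive InitStmt (A F : Type) : Type where
  | base : BForm A F → InitStmt A F
  | common : BForm A F → InitStmt A F
  | cBel : A → BForm A F → InitStmt A F
  | cWhether : A → BForm A F → InitStmt A F
  | cIgnorant : A → BForm A F → InitStmt A F

/-- The belief formula expressed by an initial statement (`C` is common
knowledge among all agents). -/
def InitStmt.form {A F : Type} : InitStmt A F → BForm A F
  | .base φ => φ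
  | .common φ => .cbel Set.univ φ
  | .cBel i φ => .cbel Set.univ (.bel i φ)
  | .cWhether i φ => .cbel Set.univ (.disj (.bel i φ) (.bel i (.neg φ)))
  | .cIgnorant i φ => .cbel Set.univ (.conj (.neg (.bel i φ)) (.neg (.bel i (.neg φ))))

/-- The fluent formula occurring in an initial statement. -/
def InitStmt.inner {A F : Type} : InitStmt A F → BForm A F
  | .base φ => φ
  | .common φ => φ
  | .cBel _ φ => φ
  | .cWhether _ φ => φ
  | .cIgnorant _ φ => φ

/-- A definite action theory: a set of initial statements whose embedded
formulae are fluent formulae, such that for each fluent formula `φ` and agent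
`i` one of the statements `C(B_i φ)`, `C(B_i φ ∨ B_i ¬φ)`,
`C(¬B_i φ ∧ ¬B_i ¬φ)` belongs to the theory. -/
structure DefiniteTheory (A F : Type) where
  stmts : Set (InitStmt A F)
  wf : ∀ st ∈ stmts, IsProp st.inner
  definite : ∀ φ : BForm A F, IsProp φ → ∀ i : A,
    InitStmt.cBel i φ ∈ stmts ∨ InitStmt.cWhether i φ ∈ stmts ∨ InitStmt.cIgnorant i φ ∈ stmts

/-- `(M,s)` is an initial state of the theory `T`: it satisfies every initial
statement of `T`. -/
def InitialState {A W F : Type} (T : DefiniteTheory A F) (M : Kripke A W F) (s : W) : Prop :=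
  ∀ st ∈ T.stmts, sat M s st.form

/-- A definite action theory is complete if for each fluent `f`, the literal
`f` or its negation appears in a statement of one of the forms
`initially φ`, `initially C φ`, `initially C(B_i φ)`, so that the literals of
these statements determine a complete interpretation of the fluents. -/
def DefiniteTheory.Complete {A F : Type} (T : DefiniteTheory A F) : Prop :=
  ∀ f : F,
    (InitStmt.base (.atom f) ∈ T.stmts ∨ InitStmt.common (.atom f) ∈ T.stmts ∨
      ∃ i : A, InitStmt.cBel i (.atom f) ∈ T.stmts) ∨
    (InitStmt.base (.neg (.atom f)) ∈ T.stmts ∨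
      InitStmt.common (.neg (.atom f)) ∈ T.stmts ∨
      ∃ i : A, InitStmt.cBel i (.neg (.atom f)) ∈ T.stmts)

/-!
If agent `i` relates `u` to `v` in `M₁` but not in `M₂`, then, worlds being determined by their
valuations, `B_i ¬state(v)` holds at `u` in `M₂` while `¬B_i ¬state(v)` holds at `u` in `M₁`.
Definiteness puts one of `C(B_i state(v))`, `C(B_i state(v) ∨ B_i ¬state(v))`,
`C(¬B_i state(v) ∧ ¬B_i ¬state(v))` into the theory; common knowledge reaches `u`, and each
option contradicts one of the two facts (the first two through reflexivity, since `u ≠ v`).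
Completeness fixes the valuation of the designated world, so the two pointed structures coincide.
-/

open Function

namespace BForm

variable {A F : Type}

def conjs (l : List (BForm A F)) : BForm A F :=
  l.foldr conj top

open Classical in
noncomputable def literal (p : F → Prop) (f : F) : BForm A F :=
  if p f then atom f else neg (atom f)

/-- The paper's `state(v)` is `ofValuation (M.val v)`. -/
noncomputable def ofValuation [Fintype F] (p : F → Prop) : BForm A F :=
  conjs (Finset.univ.toList.map (literal p))

lemma isProp_conjs {l : List (BForm A F)} (h : ∀ φ ∈ l, IsProp φ) : IsProp (conjs l) := by
  induction l with
  | nil => trivial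
  | cons φ l ih => exact ⟨h φ List.mem_cons_self, ih fun ψ hψ => h ψ (List.mem_cons_of_mem _ hψ)⟩

lemma isProp_literal (p : F → Prop) (f : F) : IsProp (literal (A := A) p f) := by
  unfold literal; split <;> trivial

lemma isProp_ofValuation [Fintype F] (p : F → Prop) : IsProp (ofValuation (A := A) p) :=
  isProp_conjs fun _ hφ => by
    obtain ⟨f, -, rfl⟩ := List.mem_map.mp hφ
    exact isProp_literal p f

variable {W : Type} (M : Kripke A W F) (w : W)

lemma sat_conjs (l : List (BForm A F)) : sat M w (conjs l) ↔ ∀ φ ∈ l, sat M w φ := by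
  induction l with
  | nil => simp [conjs, sat]
  | cons φ l ih => simp [conjs, sat, ← ih]

lemma sat_literal (p : F → Prop) (f : F) : sat M w (literal p f) ↔ (M.val w f ↔ p f) := by
  unfold literal; split <;> simp_all [sat]

lemma sat_ofValuation [Fintype F] (p : F → Prop) : sat M w (ofValuation p) ↔ M.val w = p := by
  simp only [ofValuation, sat_conjs, List.forall_mem_map, Finset.mem_toList, Finset.mem_univ,
    forall_const, sat_literal, funext_iff, eq_iff_iff]

end BForm

open BForm

section CommonKnowledge

variable {A W F : Type} {M : Kripke A W F} {s u : W} {α : Set A} {ψ : BForm A F}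

lemma reachIn_univ_of_reach (h : reach M s u) : reachIn M Set.univ s u :=
  Relation.ReflTransGen.mono (fun _ _ ⟨i, hi⟩ => ⟨i, trivial, hi⟩) _ _ h

lemma sat_cbel_of_reachIn (h : sat M s (.cbel α ψ)) (hr : reachIn M α s u) :
    sat M u (.cbel α ψ) := by
  induction hr with
  | refl => exact h
  | tail _ hstep ih =>
    obtain ⟨i, hi, hrel⟩ := hstep
    exact fun k => ih (k + 1) i hi _ hrel

lemma sat_of_cbel_univ_of_reach (h : sat M s (.cbel Set.univ ψ)) (hr : reach M s u) :
    sat M u ψ :=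
  sat_cbel_of_reachIn h (reachIn_univ_of_reach hr) 0

end CommonKnowledge

namespace InitialState

variable {A F : Type} {T : DefiniteTheory A F}

lemma sat_of_mem {W : Type} {M : Kripke A W F} {s : W} (hI : InitialState T M s)
    (hrefl : ∀ i w, M.rel i w w) {φ : BForm A F}
    (h : InitStmt.base φ ∈ T.stmts ∨ InitStmt.common φ ∈ T.stmts ∨
      ∃ i : A, InitStmt.cBel i φ ∈ T.stmts) :
    sat M s φ := by
  rcases h with h | h | ⟨i, h⟩
  · exact hI _ h
  · exact hI _ h 0
  · exact hI _ h 0 s (hrefl i s)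

lemma val_eq_of_complete {W₁ W₂ : Type} {M₁ : Kripke A W₁ F} {M₂ : Kripke A W₂ F}
    {s₁ : W₁} {s₂ : W₂} (hcomp : T.Complete)
    (hI₁ : InitialState T M₁ s₁) (hrefl₁ : ∀ i w, M₁.rel i w w)
    (hI₂ : InitialState T M₂ s₂) (hrefl₂ : ∀ i w, M₂.rel i w w) :
    M₁.val s₁ = M₂.val s₂ := by
  funext f
  rcases hcomp f with h | h
  · exact propext (iff_of_true (hI₁.sat_of_mem hrefl₁ h) (hI₂.sat_of_mem hrefl₂ h))
  · exact propext (iff_of_false (hI₁.sat_of_mem hrefl₁ h) (hI₂.sat_of_mem hrefl₂ h))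

end InitialState

lemma rel_of_rel_of_initialState {A W F : Type} [Fintype F] {T : DefiniteTheory A F}
    {M₁ M₂ : Kripke A W F} {s₁ s₂ u v : W} {i : A}
    (hval : M₁.val = M₂.val) (hred : Injective M₁.val)
    (hrefl₁ : ∀ i w, M₁.rel i w w) (hrefl₂ : ∀ i w, M₂.rel i w w)
    (hu₁ : reach M₁ s₁ u) (hu₂ : reach M₂ s₂ u)
    (hI₁ : InitialState T M₁ s₁) (hI₂ : InitialState T M₂ s₂)
    (h₁ : M₁.rel i u v) : M₂.rel i u v := by
  by_contra h₂
  set φ : BForm A F := ofValuation (M₁.val v)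
  have hφ₁ : ∀ w, sat M₁ w φ ↔ w = v := fun w => (sat_ofValuation M₁ w _).trans hred.eq_iff
  have hφ₂ : ∀ w, sat M₂ w φ ↔ w = v := fun w => by
    rw [sat_ofValuation, ← hval]; exact hred.eq_iff
  have huv : u ≠ v := by rintro rfl; exact h₂ (hrefl₂ i u)
  have hbel₂ : sat M₂ u (.bel i (.neg φ)) := fun w hw hφw => h₂ ((hφ₂ w).mp hφw ▸ hw)
  have hnbel₁ : ¬ sat M₁ u (.bel i (.neg φ)) := fun h => h v h₁ ((hφ₁ v).mpr rfl)
  rcases T.definite φ (isProp_ofValuation _) i with hc | hc | hc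
  · have hbel : sat M₂ u (.bel i φ) := sat_of_cbel_univ_of_reach (hI₂ _ hc) hu₂
    exact huv ((hφ₂ u).mp (hbel u (hrefl₂ i u)))
  · rcases sat_of_cbel_univ_of_reach (hI₁ _ hc) hu₁ with hbel | hbel
    · exact huv ((hφ₁ u).mp (hbel u (hrefl₁ i u)))
    · exact hnbel₁ hbel
  · exact (sat_of_cbel_univ_of_reach (hI₂ _ hc) hu₂).2 hbel₂

lemma Nat.card_le_two_pow_of_injective {W F : Type} [Fintype F] {val : W → F → Prop}
    (hval : Injective val) : Nat.card W ≤ 2 ^ Fintype.card F := by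
  calc Nat.card W ≤ Nat.card (F → Prop) := Nat.card_le_card_of_injective _ hval
    _ = 2 ^ Fintype.card F := by
      rw [Nat.card_fun, Nat.card_eq_fintype_card, Fintype.card_prop, Nat.card_eq_fintype_card]

/-- Two initial S5-states of a complete definite action theory,
both in reduced form with the same worlds and valuations and with all worlds
reachable from the designated world, have identical accessibility relations;
hence the initial S5-state is unique up to equivalence and has at most
`2^{|F|}` worlds. -/
theorem stmt15 {A F W : Type} [Fintype F] (T : DefiniteTheory A F)
    (hcomp : T.Complete)
    (M₁ M₂ : Kripke A W F) (s₁ s₂ : W)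
    (hval : M₁.val = M₂.val) (hred : Function.Injective M₁.val)
    (h5₁ : S5 M₁) (h5₂ : S5 M₂)
    (hr₁ : ∀ u : W, reach M₁ s₁ u) (hr₂ : ∀ u : W, reach M₂ s₂ u)
    (hI₁ : InitialState T M₁ s₁) (hI₂ : InitialState T M₂ s₂) :
    (∀ i : A, M₁.rel i = M₂.rel i) ∧ equivState M₁ s₁ M₂ s₂ ∧
      Nat.card W ≤ 2 ^ Fintype.card F := by
  have hrefl₁ : ∀ i w, M₁.rel i w w := fun i => (h5₁ i).refl
  have hrefl₂ : ∀ i w, M₂.rel i w w := fun i => (h5₂ i).refl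
  have hred₂ : Injective M₂.val := hval ▸ hred
  have hrel : ∀ i, M₁.rel i = M₂.rel i := fun i => funext₂ fun u v => propext
    ⟨rel_of_rel_of_initialState hval hred hrefl₁ hrefl₂ (hr₁ u) (hr₂ u) hI₁ hI₂,
      rel_of_rel_of_initialState hval.symm hred₂ hrefl₂ hrefl₁ (hr₂ u) (hr₁ u) hI₂ hI₁⟩
  have hs : s₁ = s₂ :=
    hred ((hI₁.val_eq_of_complete hcomp hrefl₁ hI₂ hrefl₂).trans (congrFun hval s₂).symm)
  have hM : M₁ = M₂ := by
    cases M₁; cases M₂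
    exact congrArg₂ Kripke.mk hval (funext hrel)
  refine ⟨hrel, ?_, Nat.card_le_two_pow_of_injective hred⟩
  subst hM hs
  exact fun _ => Iff.rfl
end
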